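/- arXiv:quant-ph/0304162 — 2 statements merged into one kernel-verified Lean document; each statement's English description precedes it below -/
import Mathlib

section
/- Let q ∈ ℝ[x] satisfy |q(i)| ≤ 2 for all integers i with 1 ≤ i < c, |q(c)| ≥ 2, and |q(1) − q(2)| ≥ 1/6, where c ≥ 2 is an integer. Then deg q = Ω(√c): there is an absolute constant C > 0 with deg q ≥ C·√c. -/
open Finset Nat Polynomial

lemma aux_fact (m : ℕ) : ∀ n : ℕ, m ! * ∏ i ∈ range n, (m + 1 + i) = (m + n)!
  | 0 => by simp
  | n + 1 => by
    rw [prod_range_succ, ← mul_assoc, aux_fact m n, ← Nat.add_assoc,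
      Nat.factorial_succ, mul_comm]
    ring_nf

-- ∏_{k ∈ Ico 1 j} (j - k) = (j-1)!
lemma aux_sub (j : ℕ) : ∏ k ∈ Ico 1 j, (j - k) = (j - 1)! := by
  rw [prod_Ico_eq_prod_range]
  have : ∀ i ∈ range (j - 1), j - (1 + i) = (j - 1) - i := by intro i hi; omega
  rw [prod_congr rfl this]
  have h2 : ∀ i ∈ range (j - 1), (j - 1) - i = ((j - 1) - 1 - i) + 1 := by
    intro i hi; rw [mem_range] at hi; omega
  rw [prod_congr rfl h2, prod_range_reflect (fun i => i + 1) (j-1),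
    prod_range_add_one_eq_factorial]

lemma aux_sq_fact (m : ℕ) : ∀ k : ℕ, k ≤ m → (m !)^2 ≤ (m - k)! * (m + k)!
  | 0, _ => by simp [pow_two]
  | k + 1, h => by
    have IH := aux_sq_fact m k (by omega)
    have hpos : 0 < m - k := by omega
    have key : (m - k) * ((m - (k+1))! * (m + (k+1))!) = ((m-k)! * (m+k)!) * (m + k + 1) := by
      have h1 : (m - k)! = (m - (k+1))! * (m - k) := by
        have : m - k = (m - (k+1)) + 1 := by omega
        rw [this, Nat.factorial_succ]; ring
      have h2 : (m + (k+1))! = (m + k)! * (m + k + 1) := by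
        have : m + (k+1) = (m + k) + 1 := by omega
        rw [this, Nat.factorial_succ]; ring
      rw [h1, h2]; ring
    have : (m - k) * (m !)^2 ≤ (m - k) * ((m - (k+1))! * (m + (k+1))!) := by
      rw [key]
      calc (m - k) * (m !)^2 ≤ ((m-k)! * (m+k)!) * (m - k) := by
            rw [mul_comm]; exact Nat.mul_le_mul_right _ IH
        _ ≤ ((m-k)! * (m+k)!) * (m + k + 1) := Nat.mul_le_mul_left _ (by omega)
    exact Nat.le_of_mul_le_mul_left this hpos

lemma key_prod (d j : ℕ) (h1 : 1 ≤ j) (hjd : j ≤ d) :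
    ∏ k ∈ (Icc 1 d).erase j, ((k:ℝ)^2 / |(k:ℝ)^2 - (j:ℝ)^2|) ≤ 2 := by
  have hsplit : (Icc 1 d).erase j = Ico 1 j ∪ Icc (j+1) d := by
    ext k; simp only [mem_erase, mem_Icc, mem_union, mem_Ico]; omega
  have hdisj : Disjoint (Ico 1 j) (Icc (j+1) d) := by
    rw [disjoint_left]; intro k hk hk'
    rw [mem_Ico] at hk; rw [mem_Icc] at hk'; omega
  rw [hsplit, prod_union hdisj]
  -- names for the ℕ products
  set A := ∏ k ∈ Ico 1 j, k with hA'
  set B := ∏ k ∈ Ico 1 j, (j - k) with hB'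
  set C := ∏ k ∈ Ico 1 j, (j + k) with hC'
  set D := ∏ k ∈ Icc (j+1) d, k with hD'
  set E := ∏ k ∈ Icc (j+1) d, (k - j) with hE'
  set F := ∏ k ∈ Icc (j+1) d, (k + j) with hF'
  have e1 : ∏ k ∈ Ico 1 j, ((k:ℝ)^2 / |(k:ℝ)^2 - (j:ℝ)^2|)
      = ((A^2 : ℕ) : ℝ) / ((B * C : ℕ) : ℝ) := by
    rw [hA', hB', hC', ← prod_mul_distrib]
    push_cast [← prod_pow]
    rw [← prod_div_distrib]
    refine prod_congr rfl fun k hk => ?_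
    rw [mem_Ico] at hk
    have hkj : (k:ℝ) ≤ (j:ℝ) := by exact_mod_cast hk.2.le
    have habs : |(k:ℝ)^2 - (j:ℝ)^2| = ((j:ℝ)-(k:ℝ)) * ((j:ℝ)+(k:ℝ)) := by
      rw [abs_of_nonpos (by nlinarith), neg_sub]; ring
    rw [habs, Nat.cast_sub hk.2.le]
  have e2 : ∏ k ∈ Icc (j+1) d, ((k:ℝ)^2 / |(k:ℝ)^2 - (j:ℝ)^2|)
      = ((D^2 : ℕ) : ℝ) / ((E * F : ℕ) : ℝ) := by
    rw [hD', hE', hF', ← prod_mul_distrib]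
    push_cast [← prod_pow]
    rw [← prod_div_distrib]
    refine prod_congr rfl fun k hk => ?_
    rw [mem_Icc] at hk
    have hjk : (j:ℝ) ≤ (k:ℝ) := by exact_mod_cast (by omega : j ≤ k)
    have habs : |(k:ℝ)^2 - (j:ℝ)^2| = ((k:ℝ)-(j:ℝ)) * ((k:ℝ)+(j:ℝ)) := by
      rw [abs_of_nonneg (by nlinarith)]; ring
    rw [habs, Nat.cast_sub (by omega : j ≤ k)]
  rw [e1, e2]
  rw [show ((A^2:ℕ):ℝ)/((B*C:ℕ):ℝ) * (((D^2:ℕ):ℝ)/((E*F:ℕ):ℝ))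
      = ((A^2:ℕ):ℝ)*((D^2:ℕ):ℝ)/(((B*C:ℕ):ℝ)*((E*F:ℕ):ℝ)) from by ring]
  -- positivity of denominators
  have hBpos : 0 < B := prod_pos (fun k hk => by rw [mem_Ico] at hk; omega)
  have hCpos : 0 < C := prod_pos (fun k hk => by positivity)
  have hEpos : 0 < E := prod_pos (fun k hk => by rw [mem_Icc] at hk; omega)
  have hFpos : 0 < F := prod_pos (fun k hk => by rw [mem_Icc] at hk; omega)
  have hden : (0:ℝ) < ((B*C:ℕ):ℝ) * ((E*F:ℕ):ℝ) := by positivity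
  rw [div_le_iff₀ hden]
  -- the ℕ identities
  have hA : A = (j-1)! := by
    rw [hA']
    have : Ico 1 j = Ico 1 ((j-1)+1) := by congr 1; omega
    rw [this, prod_Ico_id_eq_factorial]
  have hB : B = (j-1)! := aux_sub j
  have hC : j ! * C = (2*j-1)! := by
    rw [hC', prod_Ico_eq_prod_range]
    have : ∀ i ∈ range (j-1), j + (1+i) = j + 1 + i := fun i _ => by omega
    rw [prod_congr rfl this, aux_fact j (j-1)]
    congr 1; omega
  have hD : j ! * D = d ! := by
    rw [hD']
    have : Icc (j+1) d = Ico (j+1) (d+1) := by ext k; simp [mem_Icc, mem_Ico]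
    rw [this, prod_Ico_eq_prod_range]
    have h2 : ∀ i ∈ range (d+1-(j+1)), j + 1 + i = id (j + 1 + i) := fun i _ => rfl
    have := aux_fact j (d - j)
    have h3 : d + 1 - (j+1) = d - j := by omega
    rw [h3]
    rw [show (fun i => j+1+i) = (fun i => j+1+i) from rfl]
    have h4 : (j + (d-j))! = d ! := by congr 1; omega
    rw [← h4, ← aux_fact j (d-j)]
  have hE : E = (d-j)! := by
    rw [hE']
    have : Icc (j+1) d = Ico (j+1) (d+1) := by ext k; simp [mem_Icc, mem_Ico]
    rw [this, prod_Ico_eq_prod_range]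
    have h3 : d + 1 - (j+1) = d - j := by omega
    rw [h3]
    have : ∀ i ∈ range (d-j), j + 1 + i - j = i + 1 := fun i _ => by omega
    rw [prod_congr rfl this, prod_range_add_one_eq_factorial]
  have hF : (2*j)! * F = (d+j)! := by
    rw [hF']
    have : Icc (j+1) d = Ico (j+1) (d+1) := by ext k; simp [mem_Icc, mem_Ico]
    rw [this, prod_Ico_eq_prod_range]
    have h3 : d + 1 - (j+1) = d - j := by omega
    rw [h3]
    have : ∀ i ∈ range (d-j), j + 1 + i + j = 2*j + 1 + i := fun i _ => by omega
    rw [prod_congr rfl this, aux_fact (2*j) (d-j)]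
    congr 1; omega
  -- the ℕ inequality
  have hnat : A^2 * D^2 ≤ 2 * ((B*C) * (E*F)) := by
    have hw : 0 < (j !)^2 * (2*j)! := by positivity
    have hjf : j ! = j * (j-1)! := by
      conv_lhs => rw [show j = (j-1)+1 by omega]
      rw [Nat.factorial_succ]; congr 1; omega
    have h2jf : (2*j)! = (2*j) * (2*j-1)! := by
      conv_lhs => rw [show 2*j = (2*j-1)+1 by omega]
      rw [Nat.factorial_succ]; congr 1; omega
    have lhs_eq : A^2 * D^2 * ((j !)^2 * (2*j)!) = (2*j) * ((j-1)!^2 * (2*j-1)!) * (d !)^2 := by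
      calc A^2 * D^2 * ((j !)^2 * (2*j)!) = A^2 * (j ! * D)^2 * (2*j)! := by ring
        _ = (2*j) * ((j-1)!^2 * (2*j-1)!) * (d !)^2 := by rw [hD, hA, h2jf]; ring
    have rhs_eq : 2 * ((B*C) * (E*F)) * ((j !)^2 * (2*j)!)
        = (2*j) * ((j-1)!^2 * (2*j-1)!) * ((d-j)! * (d+j)!) := by
      calc 2 * ((B*C) * (E*F)) * ((j !)^2 * (2*j)!)
          = 2 * B * E * (j ! * C) * ((2*j)! * F) * j ! := by ring
        _ = (2*j) * ((j-1)!^2 * (2*j-1)!) * ((d-j)! * (d+j)!) := by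
            rw [hB, hC, hE, hF, hjf]; ring
    have : A^2 * D^2 * ((j !)^2 * (2*j)!) ≤ 2 * ((B*C) * (E*F)) * ((j !)^2 * (2*j)!) := by
      rw [lhs_eq, rhs_eq]
      exact Nat.mul_le_mul_left _ (aux_sq_fact d j hjd)
    exact Nat.le_of_mul_le_mul_right this hw
  calc ((A^2:ℕ):ℝ) * ((D^2:ℕ):ℝ) = ((A^2*D^2 : ℕ):ℝ) := by push_cast; ring
    _ ≤ ((2 * ((B*C) * (E*F)) : ℕ):ℝ) := by exact_mod_cast hnat
    _ = 2 * (((B*C:ℕ):ℝ) * ((E*F:ℕ):ℝ)) := by push_cast; ring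

lemma one_sub_sum_le_prod (t : Finset ℕ) (f : ℕ → ℝ) (h0 : ∀ i ∈ t, 0 ≤ f i)
    (h1 : ∀ i ∈ t, f i ≤ 1) : 1 - ∑ i ∈ t, f i ≤ ∏ i ∈ t, (1 - f i) := by
  induction t using Finset.cons_induction with
  | empty => simp
  | cons a t ha IH =>
    rw [Finset.prod_cons, Finset.sum_cons]
    have h0a := h0 a (mem_cons_self a t)
    have h1a := h1 a (mem_cons_self a t)
    have IH' := IH (fun i hi => h0 i (mem_cons.2 (Or.inr hi))) (fun i hi => h1 i (mem_cons.2 (Or.inr hi)))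
    have hs0 : 0 ≤ ∑ i ∈ t, f i := sum_nonneg (fun i hi => h0 i (mem_cons.2 (Or.inr hi)))
    calc 1 - (f a + ∑ i ∈ t, f i) ≤ (1 - f a) * (1 - ∑ i ∈ t, f i) := by nlinarith
      _ ≤ (1 - f a) * ∏ i ∈ t, (1 - f i) := by
          apply mul_le_mul_of_nonneg_left IH' (by linarith)

lemma sum_inv_sq : ∀ d : ℕ, 1 ≤ d → ∑ k ∈ Icc 1 d, ((k:ℝ)^2)⁻¹ ≤ 2 - ((d:ℝ))⁻¹ := by
  intro d hd
  induction d, hd using Nat.le_induction with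
  | base => norm_num
  | succ d hd IH =>
    rw [Finset.sum_Icc_succ_top (by omega : 1 ≤ d + 1)]
    have IH' := IH
    have hd0 : (0:ℝ) < d := by exact_mod_cast hd
    have key : ((((d:ℝ)+1))^2)⁻¹ ≤ (d:ℝ)⁻¹ - ((d:ℝ)+1)⁻¹ := by
      rw [inv_le_iff_one_le_mul₀ (by positivity)] at *
      have : (d:ℝ)⁻¹ - ((d:ℝ)+1)⁻¹ = ((d:ℝ)*((d:ℝ)+1))⁻¹ := by
        field_simp
        ring
      rw [this, inv_mul_eq_div, le_div_iff₀ (by positivity)]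
      nlinarith
    push_cast
    linarith

lemma main_est (q : Polynomial ℝ) (s : ℕ) (hs : 73 ≤ s) (d : ℕ) (hdeg : q.natDegree ≤ d)
    (hd1 : 1 ≤ d)
    (hb : ∀ j : ℕ, j ≤ d → |q.eval ((1 + s * j^2 : ℕ) : ℝ)| ≤ 2) :
    |q.eval 1 - q.eval 2| < 1/6 := by
  have hs0 : (0:ℝ) < s := by exact_mod_cast (by omega : 0 < s)
  set v : ℕ → ℝ := fun j => 1 + (s:ℝ) * (j:ℝ)^2 with hv
  have hvnat : ∀ j : ℕ, v j = ((1 + s * j^2 : ℕ) : ℝ) := by intro j; rw [hv]; push_cast; ring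
  have hbv : ∀ j : ℕ, j ≤ d → |q.eval (v j)| ≤ 2 := fun j hj => by rw [hvnat]; exact hb j hj
  set S : Finset ℕ := range (d+1) with hS
  have hvinj : Set.InjOn v S := by
    intro a _ b _ h
    rw [hv] at h
    simp only at h
    have h2 : (s:ℝ) * (a:ℝ)^2 = (s:ℝ) * (b:ℝ)^2 := by linarith
    have h3 : (a:ℝ)^2 = (b:ℝ)^2 := mul_left_cancel₀ (ne_of_gt hs0) h2
    have h4 : a^2 = b^2 := by exact_mod_cast h3
    nlinarith [Nat.le_of_eq h4, Nat.le_total a b]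
  have hdlt : q.degree < (#S : ℕ) := by
    rw [hS, card_range]
    refine lt_of_le_of_lt degree_le_natDegree ?_
    exact_mod_cast Nat.lt_succ_of_le hdeg
  -- Lagrange interpolation at 2
  set L : ℕ → ℝ := fun j => (Lagrange.basis S v j).eval 2 with hL
  have hinterp : q.eval 2 = ∑ j ∈ S, q.eval (v j) * L j := by
    conv_lhs => rw [Lagrange.eq_interpolate hvinj hdlt]
    rw [Lagrange.interpolate_apply, eval_finset_sum]
    exact Finset.sum_congr rfl fun j _ => by rw [eval_mul, eval_C]
  have hLprod : ∀ j, L j = ∏ k ∈ S.erase j, ((v j - v k)⁻¹ * (2 - v k)) := by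
    intro j
    rw [hL]
    simp only [Lagrange.basis, eval_prod, Lagrange.basisDivisor, eval_mul, eval_C, eval_sub, eval_X]
  -- bound on L j for 1 ≤ j ≤ d
  have hLj : ∀ j, 1 ≤ j → j ≤ d → |L j| ≤ 2 / ((s:ℝ) * (j:ℝ)^2) := by
    intro j h1j hjd
    have hj0 : (0:ℝ) < (s:ℝ) * (j:ℝ)^2 := by
      have : (1:ℝ) ≤ (j:ℝ) := by exact_mod_cast h1j
      positivity
    have hsplit : S.erase j = insert 0 ((Icc 1 d).erase j) := by
      ext k
      simp only [hS, mem_erase, mem_range, mem_insert, mem_Icc]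
      omega
    have h0notin : 0 ∉ (Icc 1 d).erase j := by simp
    rw [hLprod j, hsplit, prod_insert h0notin, abs_mul]
    have hterm0 : |(v j - v 0)⁻¹ * (2 - v 0)| = ((s:ℝ) * (j:ℝ)^2)⁻¹ := by
      rw [hv]; simp only [Nat.cast_zero]
      rw [abs_mul, abs_inv]
      norm_num
    rw [hterm0]
    have hbound : |∏ k ∈ (Icc 1 d).erase j, ((v j - v k)⁻¹ * (2 - v k))| ≤ 2 := by
      rw [abs_prod]
      calc ∏ k ∈ (Icc 1 d).erase j, |(v j - v k)⁻¹ * (2 - v k)|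
          ≤ ∏ k ∈ (Icc 1 d).erase j, ((k:ℝ)^2 / |(k:ℝ)^2 - (j:ℝ)^2|) := by
            apply prod_le_prod (fun k _ => abs_nonneg _)
            intro k hk
            simp only [mem_erase, mem_Icc] at hk
            obtain ⟨hkj, hk1, hkd⟩ := hk
            have hk0 : (0:ℝ) < (k:ℝ)^2 := by
              have : (1:ℝ) ≤ (k:ℝ) := by exact_mod_cast hk1
              positivity
            have habsne : (0:ℝ) < |(k:ℝ)^2 - (j:ℝ)^2| := by
              rw [abs_pos, sub_ne_zero]
              intro hc
              have : k^2 = j^2 := by exact_mod_cast hc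
              exact hkj (by nlinarith [Nat.le_total k j])
            have hvdiff : |v j - v k| = (s:ℝ) * |(k:ℝ)^2 - (j:ℝ)^2| := by
              rw [hv]
              simp only
              rw [show (1 + (s:ℝ)*(j:ℝ)^2) - (1 + (s:ℝ)*(k:ℝ)^2) = (s:ℝ)*((j:ℝ)^2-(k:ℝ)^2) by ring,
                abs_mul, abs_of_pos hs0, abs_sub_comm]
            have hnum : |2 - v k| ≤ (s:ℝ) * (k:ℝ)^2 := by
              rw [hv]
              simp only
              rw [show (2:ℝ) - (1 + (s:ℝ)*(k:ℝ)^2) = 1 - (s:ℝ)*(k:ℝ)^2 by ring]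
              rw [abs_sub_comm, abs_of_nonneg]
              · nlinarith
              · have hs73 : (73:ℝ) ≤ s := by exact_mod_cast hs
                have hk1' : (1:ℝ) ≤ (k:ℝ)^2 := by
                  have : (1:ℝ) ≤ (k:ℝ) := by exact_mod_cast hk1
                  nlinarith
                nlinarith
            rw [abs_mul, abs_inv, hvdiff]
            rw [inv_mul_eq_div, div_le_div_iff₀ (by positivity) habsne]
            calc |2 - v k| * |(k:ℝ)^2 - (j:ℝ)^2| ≤ ((s:ℝ)*(k:ℝ)^2) * |(k:ℝ)^2 - (j:ℝ)^2| := by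
                  apply mul_le_mul_of_nonneg_right hnum (abs_nonneg _)
              _ = (k:ℝ)^2 * ((s:ℝ) * |(k:ℝ)^2 - (j:ℝ)^2|) := by ring
        _ ≤ 2 := key_prod d j h1j hjd
    calc ((s:ℝ)*(j:ℝ)^2)⁻¹ * |∏ k ∈ (Icc 1 d).erase j, ((v j - v k)⁻¹ * (2 - v k))|
        ≤ ((s:ℝ)*(j:ℝ)^2)⁻¹ * 2 := by
          apply mul_le_mul_of_nonneg_left hbound (by positivity)
      _ = 2 / ((s:ℝ)*(j:ℝ)^2) := by
          field_simp
  -- L 0 bounds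
  have herase0 : S.erase 0 = Icc 1 d := by
    ext k; simp only [hS, mem_erase, mem_range, mem_Icc]; omega
  have hL0prod : L 0 = ∏ k ∈ Icc 1 d, (1 - ((s:ℝ)*(k:ℝ)^2)⁻¹) := by
    rw [hLprod 0, herase0]
    refine prod_congr rfl fun k hk => ?_
    rw [mem_Icc] at hk
    have hk1 : (1:ℝ) ≤ (k:ℝ) := by exact_mod_cast hk.1
    have hk0 : (0:ℝ) < (s:ℝ)*(k:ℝ)^2 := by positivity
    rw [hv]
    simp only [Nat.cast_zero]
    rw [show (1:ℝ) + (s:ℝ)*(0:ℝ)^2 - (1 + (s:ℝ)*(k:ℝ)^2) = -((s:ℝ)*(k:ℝ)^2) by ring]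
    field_simp
    ring
  have ha01 : ∀ k ∈ Icc 1 d, ((s:ℝ)*(k:ℝ)^2)⁻¹ ∈ Set.Icc (0:ℝ) 1 := by
    intro k hk
    rw [mem_Icc] at hk
    have hk1 : (1:ℝ) ≤ (k:ℝ) := by exact_mod_cast hk.1
    have hs73 : (73:ℝ) ≤ s := by exact_mod_cast hs
    constructor
    · positivity
    · rw [inv_le_one_iff₀]; right; nlinarith
  have hL0le : L 0 ≤ 1 := by
    rw [hL0prod]
    apply prod_le_one
    · intro k hk
      have := ha01 k hk
      simp only [Set.mem_Icc] at this
      linarith [this.2]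
    · intro k hk
      have := ha01 k hk
      simp only [Set.mem_Icc] at this
      linarith [this.1]
  have hsum_small : ∑ k ∈ Icc 1 d, ((s:ℝ)*(k:ℝ)^2)⁻¹ ≤ 2/(s:ℝ) := by
    have : ∀ k ∈ Icc 1 d, ((s:ℝ)*(k:ℝ)^2)⁻¹ = (s:ℝ)⁻¹ * ((k:ℝ)^2)⁻¹ := fun k _ => by
      rw [mul_inv]
    rw [sum_congr rfl this, ← mul_sum]
    have h2 : ∑ k ∈ Icc 1 d, ((k:ℝ)^2)⁻¹ ≤ 2 := by
      have := sum_inv_sq d hd1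
      have hd0 : (0:ℝ) < (d:ℝ) := by exact_mod_cast hd1
      have : (0:ℝ) ≤ ((d:ℝ))⁻¹ := by positivity
      linarith [sum_inv_sq d hd1]
    calc (s:ℝ)⁻¹ * ∑ k ∈ Icc 1 d, ((k:ℝ)^2)⁻¹ ≤ (s:ℝ)⁻¹ * 2 := by
          apply mul_le_mul_of_nonneg_left h2 (by positivity)
      _ = 2/(s:ℝ) := by rw [inv_mul_eq_div]
  have hL0ge : 1 - 2/(s:ℝ) ≤ L 0 := by
    rw [hL0prod]
    refine le_trans ?_ (one_sub_sum_le_prod _ _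
      (fun k hk => (ha01 k hk).1) (fun k hk => (ha01 k hk).2))
    linarith [hsum_small]
  -- assemble
  have hv0 : q.eval 1 = q.eval (v 0) := by rw [hv]; norm_num
  have hS' : S = insert 0 (Icc 1 d) := by
    ext k; simp only [hS, mem_insert, mem_range, mem_Icc]; omega
  have hdiff : q.eval 1 - q.eval 2 = q.eval (v 0) * (1 - L 0) - ∑ j ∈ Icc 1 d, q.eval (v j) * L j := by
    rw [hinterp, hv0, hS', sum_insert (by simp)]
    ring
  have habs1 : |q.eval (v 0) * (1 - L 0)| ≤ 2 * (2/(s:ℝ)) := by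
    rw [abs_mul]
    apply mul_le_mul (hbv 0 (by omega)) _ (abs_nonneg _) (by norm_num)
    rw [abs_of_nonneg (by linarith)]
    linarith
  have habs2 : |∑ j ∈ Icc 1 d, q.eval (v j) * L j| ≤ 8/(s:ℝ) := by
    calc |∑ j ∈ Icc 1 d, q.eval (v j) * L j| ≤ ∑ j ∈ Icc 1 d, |q.eval (v j) * L j| :=
          abs_sum_le_sum_abs _ _
      _ ≤ ∑ j ∈ Icc 1 d, 4 * ((s:ℝ)⁻¹ * ((j:ℝ)^2)⁻¹) := by
          apply sum_le_sum
          intro j hj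
          rw [mem_Icc] at hj
          rw [abs_mul]
          calc |q.eval (v j)| * |L j| ≤ 2 * (2/((s:ℝ)*(j:ℝ)^2)) := by
                apply mul_le_mul (hbv j hj.2) (hLj j hj.1 hj.2) (abs_nonneg _) (by norm_num)
            _ = 4 * ((s:ℝ)⁻¹ * ((j:ℝ)^2)⁻¹) := by
                rw [div_eq_mul_inv, mul_inv]; ring
      _ = 4 * ((s:ℝ)⁻¹ * ∑ j ∈ Icc 1 d, ((j:ℝ)^2)⁻¹) := by
          rw [← mul_sum, ← mul_sum]
      _ ≤ 4 * ((s:ℝ)⁻¹ * 2) := by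
          apply mul_le_mul_of_nonneg_left _ (by norm_num)
          apply mul_le_mul_of_nonneg_left _ (by positivity)
          have hd0 : (0:ℝ) < (d:ℝ) := by exact_mod_cast hd1
          have : (0:ℝ) ≤ ((d:ℝ))⁻¹ := by positivity
          linarith [sum_inv_sq d hd1]
      _ = 8/(s:ℝ) := by rw [inv_mul_eq_div]; ring
  have hs73 : (73:ℝ) ≤ (s:ℝ) := by exact_mod_cast hs
  calc |q.eval 1 - q.eval 2|
      = |q.eval (v 0) * (1 - L 0) - ∑ j ∈ Icc 1 d, q.eval (v j) * L j| := by rw [hdiff]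
    _ ≤ |q.eval (v 0) * (1 - L 0)| + |∑ j ∈ Icc 1 d, q.eval (v j) * L j| := abs_sub _ _
    _ ≤ 2 * (2/(s:ℝ)) + 8/(s:ℝ) := add_le_add habs1 habs2
    _ = 12/(s:ℝ) := by ring
    _ ≤ 12/73 := by
        apply div_le_div_of_nonneg_left (by norm_num) (by norm_num) hs73
    _ < 1/6 := by norm_num

/-- If `|q(i)| ≤ 2` for all integers `1 ≤ i < c`, `|q(c)| ≥ 2`, and
`|q(1) - q(2)| ≥ 1/6`, then `deg q ≥ C √c` for an absolute constant `C > 0`. -/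
theorem stmt_14 :
    ∃ C > 0, ∀ (q : Polynomial ℝ) (c : ℕ), 2 ≤ c →
      (∀ i : ℕ, 1 ≤ i → i < c → |q.eval (i : ℝ)| ≤ 2) →
      2 ≤ |q.eval (c : ℝ)| →
      1 / 6 ≤ |q.eval 1 - q.eval 2| →
      C * Real.sqrt (c : ℝ) ≤ (q.natDegree : ℝ) := by
  refine ⟨1/9, by norm_num, ?_⟩
  intro q c hc hbound _ hdiff
  set d := q.natDegree with hd
  have hd1 : 1 ≤ d := by
    by_contra h
    push_neg at h
    have hd0 : d = 0 := by omega
    obtain ⟨a, ha⟩ := Polynomial.natDegree_eq_zero.mp hd0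
    rw [← ha] at hdiff
    simp at hdiff
    linarith
  have hcb : c < 73 * d^2 + 2 := by
    by_contra h
    push_neg at h
    set s := (c-2)/(d^2) with hs'
    have hd2pos : 0 < d^2 := by positivity
    have hs : 73 ≤ s := (Nat.le_div_iff_mul_le hd2pos).mpr (by omega)
    have hmul : s * d^2 ≤ c - 2 := by
      rw [hs']
      exact Nat.div_mul_le_self _ _
    have key := main_est q s hs d le_rfl hd1 ?_
    · linarith
    · intro j hj
      apply hbound _ (by omega)
      have : s * j^2 ≤ s * d^2 := Nat.mul_le_mul_left s (Nat.pow_le_pow_left hj 2)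
      omega
  have hc81 : (c:ℝ) ≤ (9*(d:ℝ))^2 := by
    have : c ≤ 81 * d^2 := by nlinarith
    have h2 : ((c:ℕ):ℝ) ≤ ((81*d^2 : ℕ):ℝ) := by exact_mod_cast this
    push_cast at h2
    nlinarith
  have hsqrt : Real.sqrt c ≤ 9*(d:ℝ) := by
    rw [show (9:ℝ)*(d:ℝ) = Real.sqrt ((9*(d:ℝ))^2) from (Real.sqrt_sq (by positivity)).symm]
    exact Real.sqrt_le_sqrt hc81
  linarith
end

section
/- Fix n, N, and disjoint nonempty sets S_1,…,S_t ⊆ [n] with distinct targets j_1,…,j_t ∈ [N]. For a valid triple (m,a,b), define I_S(f) = ∏_k ∏_{i∈S_k} δ_{i,j_k}(f) and Q(m,a,b) = E_{σ,τ}[I_S(τ ∘ f_{m,a,b} ∘ σ)] over uniform σ ∈ S_n, τ ∈ S_N. Then Q(m,a,b) agrees with a polynomial in (m,a,b) of total degree at most Σ_k |S_k| on all valid triples. -/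
open Finset MvPolynomial



-- interval count in Fin n
lemma cnt18 (n l len : ℕ) (h : l + len ≤ n) :
    (univ.filter fun x : Fin n => l ≤ x.val ∧ x.val < l + len).card = len := by
  have e : (univ.filter fun x : Fin n => l ≤ x.val ∧ x.val < l + len)
      = (Finset.Ico l (l+len)).attachFin
          (fun m hm => lt_of_lt_of_le (Finset.mem_Ico.mp hm).2 h) := by
    ext x
    simp [Finset.mem_attachFin, Finset.mem_Ico]
  rw [e, Finset.card_attachFin, Nat.card_Ico]
  omega

lemma nat_div_eq_iff18 {b : ℕ} (hb : 0 < b) (w q : ℕ) :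
    w / b = q ↔ q * b ≤ w ∧ w < q * b + b := by
  have h0 : w / b = q ↔ q ≤ w / b ∧ w / b < q + 1 := by omega
  rw [h0, Nat.le_div_iff_mul_le hb, Nat.div_lt_iff_lt_mul hb, Nat.add_mul, Nat.one_mul]

lemma ext_count18 {α : Type*} [Fintype α] [DecidableEq α] (DD : Finset α) (u : α → α)
    (hu : Set.InjOn u ↑DD) :
    (univ.filter fun π : Equiv.Perm α => ∀ x ∈ DD, π x = u x).card
      = (Fintype.card α - DD.card).factorial := by
  classical
  have hbij : Function.Bijective (fun x : {x // x ∈ DD} =>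
      (⟨u x, Finset.mem_image_of_mem u x.2⟩ : {y // y ∈ DD.image u})) := by
    constructor
    · rintro ⟨x, hx⟩ ⟨y, hy⟩ h
      exact Subtype.ext (hu hx hy (by simpa using congrArg Subtype.val h))
    · rintro ⟨y, hy⟩
      obtain ⟨x, hx, rfl⟩ := Finset.mem_image.mp hy
      exact ⟨⟨x, hx⟩, rfl⟩
  let e := Equiv.ofBijective _ hbij
  let π₀ : Equiv.Perm α := e.extendSubtype
  have hπ₀ : ∀ x ∈ DD, π₀ x = u x := by
    intro x hx
    have := Equiv.extendSubtype_apply_of_mem e x hx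
    show e.extendSubtype x = u x
    rw [this]; rfl
  have key : (univ.filter fun π : Equiv.Perm α => ∀ x ∈ DD, π x = u x)
      = (univ.filter fun π : Equiv.Perm α => ∀ x ∈ DD, π x = x).image (fun ρ => π₀ * ρ) := by
    ext π
    simp only [Finset.mem_image, Finset.mem_filter, Finset.mem_univ, true_and]
    constructor
    · intro h
      refine ⟨π₀⁻¹ * π, fun x hx => ?_, by group⟩
      have : π₀⁻¹ (u x) = x := by
        rw [← hπ₀ x hx]; exact π₀.symm_apply_apply x
      simp [Equiv.Perm.mul_apply, h x hx, this]
    · rintro ⟨ρ, hρ, rfl⟩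
      intro x hx
      simp [Equiv.Perm.mul_apply, hρ x hx, hπ₀ x hx]
  rw [key, Finset.card_image_of_injective _ (mul_right_injective π₀)]
  have e2 : (univ.filter fun π : Equiv.Perm α => ∀ x ∈ DD, π x = x).card
      = Fintype.card {π : Equiv.Perm α // ∀ x ∈ DD, π x = x} := by
    rw [Fintype.card_subtype]
  rw [e2]
  have e3 : Fintype.card {π : Equiv.Perm α // ∀ x ∈ DD, π x = x}
      = Fintype.card (Equiv.Perm {x : α // x ∉ DD}) := by
    refine (Fintype.card_congr ?_).symm
    exact (Equiv.Perm.subtypeEquivSubtypePerm (fun x => x ∉ DD)).trans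
      (Equiv.subtypeEquivRight (fun π => by simp [not_not]))
  rw [e3, Fintype.card_perm]
  congr 1
  rw [Fintype.card_subtype_compl, Fintype.card_coe]


lemma perm_count18 {α : Type*} [Fintype α] [DecidableEq α]
    {ι : Type*} [Fintype ι] [DecidableEq ι] (D A : ι → Finset α)
    (hD : ∀ ⦃k l⦄, k ≠ l → Disjoint (D k) (D l))
    (hA : ∀ ⦃k l⦄, k ≠ l → Disjoint (A k) (A l)) :
    (univ.filter fun π : Equiv.Perm α => ∀ k, ∀ i ∈ D k, π i ∈ A k).card
      = (Fintype.card α - ∑ k, (D k).card).factorial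
        * ∏ k, ((A k).card).descFactorial ((D k).card) := by
  classical
  have hDDcard : (univ.biUnion D).card = ∑ k, (D k).card :=
    Finset.card_biUnion (fun k _ l _ h => hD h)
  have hmemDD : ∀ {x : α} {k : ι}, x ∈ D k → x ∈ univ.biUnion D :=
    fun {x k} h => Finset.mem_biUnion.mpr ⟨k, mem_univ _, h⟩
  have huniq : ∀ {x : α} {k : ι} (h : ∃ k', x ∈ D k'), x ∈ D k → h.choose = k := by
    intro x k h hk
    by_contra hne
    exact Finset.disjoint_left.mp (hD hne) h.choose_spec hk
  set T : Finset (α → α) := univ.filter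
    (fun u : α → α => Set.InjOn u ↑(univ.biUnion D) ∧ (∀ k, ∀ i ∈ D k, u i ∈ A k)
      ∧ ∀ x, x ∉ univ.biUnion D → u x = x) with hT
  have hTmem : ∀ u : α → α, u ∈ T ↔ Set.InjOn u ↑(univ.biUnion D)
      ∧ (∀ k, ∀ i ∈ D k, u i ∈ A k) ∧ ∀ x, x ∉ univ.biUnion D → u x = x := by
    intro u; rw [hT, Finset.mem_filter]; simp
  have step1 : (univ.filter fun π : Equiv.Perm α => ∀ k, ∀ i ∈ D k, π i ∈ A k).card
      = ∑ u ∈ T, ((univ.filter fun π : Equiv.Perm α => ∀ k, ∀ i ∈ D k, π i ∈ A k).filter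
          (fun π => (fun x => if x ∈ univ.biUnion D then π x else x) = u)).card := by
    apply Finset.card_eq_sum_card_fiberwise
    intro π hπ
    simp only [Finset.mem_coe, Finset.mem_filter, Finset.mem_univ, true_and] at hπ
    rw [Finset.mem_coe, hTmem]
    refine ⟨?_, fun k i hi => ?_, fun x hx => ?_⟩
    · intro x hx y hy h
      simp only [Finset.mem_coe] at hx hy
      simp only [hx, hy, if_pos] at h
      exact π.injective h
    · simp only [hmemDD hi, if_pos]
      exact hπ k i hi
    · simp [hx]
  have step2 : ∀ u ∈ T, ((univ.filter fun π : Equiv.Perm α => ∀ k, ∀ i ∈ D k, π i ∈ A k).filter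
          (fun π => (fun x => if x ∈ univ.biUnion D then π x else x) = u)).card
      = (Fintype.card α - (univ.biUnion D).card).factorial := by
    intro u hu
    rw [hTmem] at hu
    obtain ⟨hinj, hblk, hout⟩ := hu
    have efil : ((univ.filter fun π : Equiv.Perm α => ∀ k, ∀ i ∈ D k, π i ∈ A k).filter
          (fun π => (fun x => if x ∈ univ.biUnion D then π x else x) = u))
        = univ.filter (fun π : Equiv.Perm α => ∀ x ∈ univ.biUnion D, π x = u x) := by
      ext π
      simp only [Finset.mem_filter, Finset.mem_univ, true_and]
      constructor
      · rintro ⟨hE, hfun⟩ x hx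
        have := congrFun hfun x
        simpa [hx] using this
      · intro h
        refine ⟨fun k i hi => ?_, funext fun x => ?_⟩
        · rw [h i (hmemDD hi)]; exact hblk k i hi
        · by_cases hx : x ∈ univ.biUnion D
          · simpa [hx] using h x hx
          · simp [hx, hout x hx]
    rw [efil, ext_count18 _ u hinj]
  rw [step1, Finset.sum_congr rfl step2, Finset.sum_const, smul_eq_mul, hDDcard]
  have hTcard : T.card = ∏ k, ((A k).card).descFactorial ((D k).card) := by
    rw [← Fintype.card_coe T]
    -- backward map
    set G : (∀ k : ι, ({x // x ∈ D k} ↪ {x // x ∈ A k})) → α → α := fun F x =>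
      if h : ∃ k, x ∈ D k then (F h.choose ⟨x, h.choose_spec⟩ : {z // z ∈ A h.choose}).1
      else x with hG
    have hGval : ∀ (F : ∀ k : ι, ({x // x ∈ D k} ↪ {x // x ∈ A k})) (x : α) (k : ι)
        (hk : x ∈ D k), G F x = (F k ⟨x, hk⟩).1 := by
      intro F x k hk
      have hex : ∃ k', x ∈ D k' := ⟨k, hk⟩
      rw [hG]
      simp only [dif_pos hex]
      have hck := huniq hex hk
      subst hck
      rfl
    have hGout : ∀ (F : ∀ k : ι, ({x // x ∈ D k} ↪ {x // x ∈ A k})) (x : α),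
        x ∉ univ.biUnion D → G F x = x := by
      intro F x hx
      have : ¬ ∃ k, x ∈ D k := fun ⟨k, hk⟩ => hx (hmemDD hk)
      rw [hG]; simp [this]
    have h1 : ∀ (u : {u // u ∈ T}) (k : ι) (i : {x // x ∈ D k}), u.1 i ∈ A k :=
      fun u k i => ((hTmem u.1).mp u.2).2.1 k i i.2
    have h2 : ∀ (u : {u // u ∈ T}) (k : ι), Function.Injective
        (fun i : {x // x ∈ D k} => (⟨u.1 i, h1 u k i⟩ : {x // x ∈ A k})) := by
      intro u k i i' h
      exact Subtype.ext (((hTmem u.1).mp u.2).1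
        (Finset.mem_coe.mpr (hmemDD i.2)) (Finset.mem_coe.mpr (hmemDD i'.2))
        (by simpa using congrArg Subtype.val h))
    let Fwd : {u // u ∈ T} → ∀ k : ι, ({x // x ∈ D k} ↪ {x // x ∈ A k}) :=
      fun u k => ⟨fun i => ⟨u.1 i, h1 u k i⟩, h2 u k⟩
    have hFwd : ∀ (u : {u // u ∈ T}) (k : ι) (i : {x // x ∈ D k}),
        ((Fwd u k) i : α) = u.1 i := fun u k i => rfl
    have equ : {u // u ∈ T} ≃ (∀ k : ι, ({x // x ∈ D k} ↪ {x // x ∈ A k})) := by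
      refine ⟨Fwd, fun F => ⟨G F, ?_⟩, ?_, ?_⟩
      · rw [hTmem]
        refine ⟨?_, fun k i hi => ?_, hGout F⟩
        · intro x hx y hy h
          simp only [Finset.mem_coe] at hx hy
          rw [Finset.mem_biUnion] at hx hy
          obtain ⟨kx, -, hkx⟩ := hx
          obtain ⟨ky, -, hky⟩ := hy
          rw [hGval F x kx hkx, hGval F y ky hky] at h
          have hkk : kx = ky := by
            by_contra hne
            exact Finset.disjoint_left.mp (hA hne) (F kx ⟨x, hkx⟩).2 (h ▸ (F ky ⟨y, hky⟩).2)
          subst hkk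
          have := (F kx).injective (Subtype.ext h)
          exact congrArg Subtype.val this
        · rw [hGval F i k hi]
          exact (F k ⟨i, hi⟩).2
      · intro u
        apply Subtype.ext
        funext x
        dsimp only
        by_cases hx : ∃ k, x ∈ D k
        · obtain ⟨k, hk⟩ := hx
          exact (hGval (Fwd u) x k hk).trans (hFwd u k ⟨x, hk⟩)
        · have hx' : x ∉ univ.biUnion D := fun hxx => hx (by
            rw [Finset.mem_biUnion] at hxx
            obtain ⟨k, -, hk⟩ := hxx
            exact ⟨k, hk⟩)
          exact (hGout (Fwd u) x hx').trans (((hTmem u.1).mp u.2).2.2 x hx').symm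
      · intro F
        funext k
        apply Function.Embedding.ext
        intro i
        apply Subtype.ext
        exact (hFwd ⟨G F, _⟩ k i).trans (hGval F i k i.2)
    rw [Fintype.card_congr equ, Fintype.card_pi]
    exact Finset.prod_congr rfl fun k _ => by
      rw [Fintype.card_embedding_eq, Fintype.card_coe, Fintype.card_coe]
  rw [hTcard, mul_comm]

def hfun18 (n N m a b : ℕ) (hN : 0 < N) (x : Fin n) : Fin N :=
  ⟨((if x.val + 1 ≤ m then (x.val + 1 + a - 1) / a else N - (n - (x.val + 1)) / b) - 1) % N,
    Nat.mod_lt _ hN⟩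

lemma hfun_eq_iff18 {n N m a b : ℕ} (hN : 0 < N) (hmn : m ≤ n) (hnN : n ≤ N)
    (ha : 0 < a) (hb : 0 < b) (ham : a ∣ m) (hbm : b ∣ (n - m)) (x : Fin n) (y : Fin N) :
    hfun18 n N m a b hN x = y ↔
      ((y.val < m / a ∧ y.val * a ≤ x.val ∧ x.val < y.val * a + a) ∨
       (N - (n - m) / b ≤ y.val ∧ n - (N - 1 - y.val) * b - b ≤ x.val
         ∧ x.val < n - (N - 1 - y.val) * b)) := by
  obtain ⟨v, hv⟩ := x
  obtain ⟨w, hw⟩ := y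
  rw [Fin.ext_iff]
  simp only [hfun18]
  obtain ⟨r, hr⟩ : ∃ r, m / a = r := ⟨_, rfl⟩
  obtain ⟨r', hr'⟩ : ∃ r', (n - m) / b = r' := ⟨_, rfl⟩
  rw [hr, hr']
  have hra : r * a = m := by rw [← hr]; exact Nat.div_mul_cancel ham
  have hrb : r' * b = n - m := by rw [← hr']; exact Nat.div_mul_cancel hbm
  have hrm : r ≤ m := le_trans (Nat.le_mul_of_pos_right _ ha) (le_of_eq hra)
  have hr'm : r' ≤ n - m := le_trans (Nat.le_mul_of_pos_right _ hb) (le_of_eq hrb)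
  by_cases hvm : v + 1 ≤ m
  · rw [if_pos hvm, show v + 1 + a - 1 = v + a from by omega]
    obtain ⟨q, hq⟩ : ∃ q, (v + a) / a = q := ⟨_, rfl⟩
    rw [hq]
    have hq1 : 1 ≤ q := by rw [← hq]; exact (Nat.one_le_div_iff ha).mpr (by omega)
    have hqr : q < r + 1 := by
      rw [← hq, Nat.div_lt_iff_lt_mul ha, Nat.add_mul, Nat.one_mul, hra]
      omega
    have hmod : (q - 1) % N = q - 1 := Nat.mod_eq_of_lt (by omega)
    rw [hmod]
    constructor
    · intro h
      left
      have hqw : (v + a) / a = w + 1 := by omega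
      have hb2 := (nat_div_eq_iff18 ha (v + a) (w + 1)).mp hqw
      rw [Nat.add_mul, Nat.one_mul] at hb2
      exact ⟨by omega, by omega, by omega⟩
    · rintro (⟨hwr, hwl, hwu⟩ | ⟨hyB, hxl, hxu⟩)
      · have hqw : (v + a) / a = w + 1 := by
          rw [nat_div_eq_iff18 ha, Nat.add_mul, Nat.one_mul]
          omega
        omega
      · exfalso
        have h5 : (N - 1 - w) + 1 ≤ r' := by omega
        have h6 : ((N - 1 - w) + 1) * b ≤ r' * b := Nat.mul_le_mul_right _ h5
        rw [Nat.add_mul, Nat.one_mul, hrb] at h6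
        omega
  · rw [if_neg hvm]
    obtain ⟨q, hq⟩ : ∃ q, (n - (v + 1)) / b = q := ⟨_, rfl⟩
    rw [hq]
    have hmln : m < n := by omega
    have hr'1 : 1 ≤ r' := by
      rcases Nat.eq_zero_or_pos r' with h0 | h0
      · rw [h0] at hrb; omega
      · exact h0
    have hql : q < r' := by
      rw [← hq, Nat.div_lt_iff_lt_mul hb, hrb]
      omega
    have hmod : (N - q - 1) % N = N - q - 1 := Nat.mod_eq_of_lt (by omega)
    rw [hmod]
    have hb2 := (nat_div_eq_iff18 hb (n - (v + 1)) q).mp hq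
    constructor
    · intro h
      right
      have hw' : N - 1 - w = q := by omega
      rw [hw']
      have h5 : q + 1 ≤ r' := by omega
      have h6 : (q + 1) * b ≤ r' * b := Nat.mul_le_mul_right _ h5
      rw [Nat.add_mul, Nat.one_mul, hrb] at h6
      exact ⟨by omega, by omega, by omega⟩
    · rintro (⟨hwr, hwl, hwu⟩ | ⟨hyB, hxl, hxu⟩)
      · exfalso
        have h5 : w + 1 ≤ r := by omega
        have h6 : (w + 1) * a ≤ r * a := Nat.mul_le_mul_right _ h5
        rw [Nat.add_mul, Nat.one_mul, hra] at h6
        omega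
      · have h5 : (N - 1 - w) + 1 ≤ r' := by omega
        have h6 : ((N - 1 - w) + 1) * b ≤ r' * b := Nat.mul_le_mul_right _ h5
        rw [Nat.add_mul, Nat.one_mul, hrb] at h6
        have hqw : q = N - 1 - w := by
          rw [← hq, nat_div_eq_iff18 hb]
          omega
        omega

lemma fiber_card18 {n N m a b : ℕ} (hN : 0 < N) (hmn : m ≤ n) (hnN : n ≤ N)
    (ha : 0 < a) (hb : 0 < b) (ham : a ∣ m) (hbm : b ∣ (n - m)) (y : Fin N) :
    (univ.filter fun x : Fin n => hfun18 n N m a b hN x = y).card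
      = if y.val < m / a then a else if N - (n - m) / b ≤ y.val then b else 0 := by
  have hchar := fun x => hfun_eq_iff18 hN hmn hnN ha hb ham hbm x y
  obtain ⟨r, hr⟩ : ∃ r, m / a = r := ⟨_, rfl⟩
  obtain ⟨r', hr'⟩ : ∃ r', (n - m) / b = r' := ⟨_, rfl⟩
  rw [hr, hr'] at hchar ⊢
  have hra : r * a = m := by rw [← hr]; exact Nat.div_mul_cancel ham
  have hrb : r' * b = n - m := by rw [← hr']; exact Nat.div_mul_cancel hbm
  have hrm : r ≤ m := le_trans (Nat.le_mul_of_pos_right _ ha) (le_of_eq hra)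
  have hr'm : r' ≤ n - m := le_trans (Nat.le_mul_of_pos_right _ hb) (le_of_eq hrb)
  have hy := y.2
  by_cases hyA : y.val < r
  · rw [if_pos hyA]
    have h5 : y.val + 1 ≤ r := by omega
    have h6 : (y.val + 1) * a ≤ r * a := Nat.mul_le_mul_right _ h5
    rw [Nat.add_mul, Nat.one_mul, hra] at h6
    have e : (univ.filter fun x : Fin n => hfun18 n N m a b hN x = y)
        = univ.filter fun x : Fin n => y.val * a ≤ x.val ∧ x.val < y.val * a + a := by
      apply Finset.filter_congr
      intro x _
      rw [hchar x]
      constructor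
      · rintro (⟨-, h1, h2⟩ | ⟨hB, -, -⟩)
        · exact ⟨h1, h2⟩
        · exfalso; omega
      · intro h
        exact Or.inl ⟨hyA, h.1, h.2⟩
    rw [e]
    exact cnt18 n (y.val * a) a (by omega)
  · rw [if_neg hyA]
    by_cases hyB : N - r' ≤ y.val
    · rw [if_pos hyB]
      have hr'1 : 1 ≤ r' := by omega
      have h5 : (N - 1 - y.val) + 1 ≤ r' := by omega
      have h6 : ((N - 1 - y.val) + 1) * b ≤ r' * b := Nat.mul_le_mul_right _ h5
      rw [Nat.add_mul, Nat.one_mul, hrb] at h6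
      have e : (univ.filter fun x : Fin n => hfun18 n N m a b hN x = y)
          = univ.filter fun x : Fin n =>
              n - (N - 1 - y.val) * b - b ≤ x.val ∧ x.val < n - (N - 1 - y.val) * b - b + b := by
        apply Finset.filter_congr
        intro x _
        rw [hchar x]
        constructor
        · rintro (⟨h1, -, -⟩ | ⟨-, h1, h2⟩)
          · exfalso; omega
          · exact ⟨h1, by omega⟩
        · intro h
          exact Or.inr ⟨hyB, h.1, by omega⟩
      rw [e]
      exact cnt18 n _ b (by omega)
    · rw [if_neg hyB]
      rw [Finset.card_eq_zero]
      apply Finset.filter_false_of_mem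
      intro x _
      rw [hchar x]
      rintro (⟨h1, -, -⟩ | ⟨h1, -, -⟩) <;> omega

lemma cast_desc18 (x p : ℕ) :
    ((x.descFactorial p : ℕ) : ℝ) = ∏ i ∈ Finset.range p, ((x : ℝ) - i) := by
  rcases le_or_gt p x with h | h
  · rw [Nat.descFactorial_eq_prod_range, Nat.cast_prod]
    exact Finset.prod_congr rfl fun i hi => by
      rw [Nat.cast_sub (le_trans (le_of_lt (Finset.mem_range.mp hi)) h)]
  · rw [Nat.descFactorial_eq_zero_iff_lt.mpr h, Nat.cast_zero]
    exact (Finset.prod_eq_zero (Finset.mem_range.mpr h) (by simp)).symm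

lemma descmul18 {r a m : ℕ} (p : ℕ) (hra : r * a = m) :
    ∏ i ∈ Finset.range p, ((m:ℝ) - i * a) = ((r.descFactorial p : ℕ):ℝ) * (a:ℝ)^p := by
  rw [cast_desc18, show ((a:ℝ))^p = ∏ _i ∈ Finset.range p, (a:ℝ) from by
    rw [Finset.prod_const, Finset.card_range], ← Finset.prod_mul_distrib]
  apply Finset.prod_congr rfl
  intro i _
  have hm : (m:ℝ) = (r:ℝ) * (a:ℝ) := by rw [← hra]; push_cast; ring
  rw [hm]; ring

lemma desc_split18 {s : ℕ} (a : ℕ) (hs : 1 ≤ s) :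
    ((a.descFactorial s : ℕ) : ℝ) = (a:ℝ) * ∏ i ∈ Finset.Ico 1 s, ((a:ℝ) - i) := by
  rw [cast_desc18, Finset.range_eq_Ico, Finset.prod_eq_prod_Ico_succ_bot hs]
  norm_num

lemma deg18 (n t : ℕ) (sc : Fin t → ℕ) (hsc : ∀ k, 1 ≤ sc k) (c : ℝ) :
    (MvPolynomial.C c * ∑ T ∈ (univ : Finset (Fin t)).powerset,
      (∏ i ∈ Finset.range T.card, (X 0 - C (i:ℝ) * X 1))
      * (∏ k ∈ T, ∏ i ∈ Finset.Ico 1 (sc k), (X 1 - C (i:ℝ)))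
      * (∏ i ∈ Finset.range (t - T.card), (C (n:ℝ) - X 0 - C (i:ℝ) * X 2))
      * (∏ k ∈ univ \ T, ∏ i ∈ Finset.Ico 1 (sc k), (X 2 - C (i:ℝ)))
      : MvPolynomial (Fin 3) ℝ).totalDegree ≤ ∑ k, sc k := by
  have hlin : ∀ (p q : MvPolynomial (Fin 3) ℝ), p.totalDegree ≤ 1 → q.totalDegree ≤ 1 →
      (p - q).totalDegree ≤ 1 := fun p q hp hq =>
    le_trans (MvPolynomial.totalDegree_sub p q) (max_le hp hq)
  have hX : ∀ v : Fin 3, (X v : MvPolynomial (Fin 3) ℝ).totalDegree ≤ 1 :=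
    fun v => le_of_eq (MvPolynomial.totalDegree_X v)
  have hC : ∀ c' : ℝ, (C c' : MvPolynomial (Fin 3) ℝ).totalDegree ≤ 1 :=
    fun c' => le_trans (le_of_eq (MvPolynomial.totalDegree_C c')) (by norm_num)
  have hCX : ∀ (c' : ℝ) (v : Fin 3),
      (C c' * X v : MvPolynomial (Fin 3) ℝ).totalDegree ≤ 1 := fun c' v =>
    le_trans (MvPolynomial.totalDegree_mul _ _)
      (by simpa [MvPolynomial.totalDegree_C] using hX v)
  refine le_trans (MvPolynomial.totalDegree_mul _ _) ?_
  rw [MvPolynomial.totalDegree_C]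
  rw [zero_add]
  refine le_trans (MvPolynomial.totalDegree_finset_sum _ _) ?_
  apply Finset.sup_le
  intro T hT
  have hTsub : T ⊆ univ := Finset.mem_powerset.mp hT
  have hTcard : T.card ≤ t := by simpa using Finset.card_le_card hTsub
  have b1 : (∏ i ∈ Finset.range T.card,
      (X 0 - C (i:ℝ) * X 1) : MvPolynomial (Fin 3) ℝ).totalDegree ≤ T.card := by
    refine le_trans (MvPolynomial.totalDegree_finset_prod _ _) ?_
    calc ∑ i ∈ Finset.range T.card, ((X 0 - C (i:ℝ) * X 1 : MvPolynomial (Fin 3) ℝ)).totalDegree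
        ≤ ∑ _i ∈ Finset.range T.card, 1 :=
          Finset.sum_le_sum fun i _ => hlin _ _ (hX 0) (hCX _ 1)
      _ = T.card := by simp
  have b2 : (∏ k ∈ T, ∏ i ∈ Finset.Ico 1 (sc k),
      (X 1 - C (i:ℝ)) : MvPolynomial (Fin 3) ℝ).totalDegree ≤ ∑ k ∈ T, (sc k - 1) := by
    refine le_trans (MvPolynomial.totalDegree_finset_prod _ _) (Finset.sum_le_sum fun k _ => ?_)
    refine le_trans (MvPolynomial.totalDegree_finset_prod _ _) ?_
    calc ∑ i ∈ Finset.Ico 1 (sc k), ((X 1 - C (i:ℝ) : MvPolynomial (Fin 3) ℝ)).totalDegree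
        ≤ ∑ _i ∈ Finset.Ico 1 (sc k), 1 :=
          Finset.sum_le_sum fun i _ => hlin _ _ (hX 1) (hC _)
      _ = sc k - 1 := by simp [Nat.card_Ico]
  have b3 : (∏ i ∈ Finset.range (t - T.card),
      (C (n:ℝ) - X 0 - C (i:ℝ) * X 2) : MvPolynomial (Fin 3) ℝ).totalDegree ≤ t - T.card := by
    refine le_trans (MvPolynomial.totalDegree_finset_prod _ _) ?_
    calc ∑ i ∈ Finset.range (t - T.card),
          ((C (n:ℝ) - X 0 - C (i:ℝ) * X 2 : MvPolynomial (Fin 3) ℝ)).totalDegree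
        ≤ ∑ _i ∈ Finset.range (t - T.card), 1 :=
          Finset.sum_le_sum fun i _ => hlin _ _ (hlin _ _ (hC _) (hX 0)) (hCX _ 2)
      _ = t - T.card := by simp
  have b4 : (∏ k ∈ univ \ T, ∏ i ∈ Finset.Ico 1 (sc k),
      (X 2 - C (i:ℝ)) : MvPolynomial (Fin 3) ℝ).totalDegree ≤ ∑ k ∈ univ \ T, (sc k - 1) := by
    refine le_trans (MvPolynomial.totalDegree_finset_prod _ _) (Finset.sum_le_sum fun k _ => ?_)
    refine le_trans (MvPolynomial.totalDegree_finset_prod _ _) ?_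
    calc ∑ i ∈ Finset.Ico 1 (sc k), ((X 2 - C (i:ℝ) : MvPolynomial (Fin 3) ℝ)).totalDegree
        ≤ ∑ _i ∈ Finset.Ico 1 (sc k), 1 :=
          Finset.sum_le_sum fun i _ => hlin _ _ (hX 2) (hC _)
      _ = sc k - 1 := by simp [Nat.card_Ico]
  refine le_trans (MvPolynomial.totalDegree_mul _ _) ?_
  refine le_trans (add_le_add (le_trans (MvPolynomial.totalDegree_mul _ _)
    (add_le_add (le_trans (MvPolynomial.totalDegree_mul _ _) (add_le_add b1 b2)) b3)) b4) ?_
  have hsplit : ∑ k ∈ univ \ T, (sc k - 1) + ∑ k ∈ T, (sc k - 1)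
      = ∑ k : Fin t, (sc k - 1) := Finset.sum_sdiff hTsub
  have hone : ∀ k : Fin t, sc k - 1 + 1 = sc k := fun k => by have := hsc k; omega
  have htot : ∑ k : Fin t, (sc k - 1) + ∑ _k : Fin t, 1 = ∑ k, sc k := by
    rw [← Finset.sum_add_distrib]
    exact Finset.sum_congr rfl fun k _ => hone k
  have hcard : (∑ _k : Fin t, (1:ℕ)) = t := by simp
  omega




lemma chain18 (n N t : ℕ) (hn : 0 < n) (hNn : n ≤ N)
    (S : Fin t → Finset (Fin n)) (j : Fin t → Fin N)
    (hSne : ∀ k, (S k).Nonempty) (hSd : Pairwise (Function.onFun Disjoint S))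
    (hj : Function.Injective j)
    (m a b : ℕ) (hmn : m ≤ n) (ha : 0 < a) (hb : 0 < b) (ham : a ∣ m) (hbm : b ∣ (n - m)) :
    (∑ σ : Equiv.Perm (Fin n), ∑ τ : Equiv.Perm (Fin N),
        ∏ k, ∏ i ∈ S k,
          (if τ (hfun18 n N m a b (lt_of_lt_of_le hn hNn) (σ i)) = j k then (1:ℝ) else 0))
      = ((n - ∑ k, (S k).card).factorial : ℝ) * ((N - t).factorial : ℝ) *
        ∑ T ∈ (univ : Finset (Fin t)).powerset,
          (((m/a).descFactorial T.card : ℕ) : ℝ)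
            * ((((n-m)/b).descFactorial (t - T.card) : ℕ) : ℝ)
            * ((∏ k ∈ T, ((a.descFactorial (S k).card : ℕ) : ℝ))
               * ∏ k ∈ univ \ T, ((b.descFactorial (S k).card : ℕ) : ℝ)) := by
  classical
  have hN : 0 < N := lt_of_lt_of_le hn hNn
  set h : Fin n → Fin N := hfun18 n N m a b hN with hh
  set s : ℕ := ∑ k, (S k).card with hs
  obtain ⟨r, hr⟩ : ∃ r, m / a = r := ⟨_, rfl⟩
  obtain ⟨r', hr'⟩ : ∃ r', (n - m) / b = r' := ⟨_, rfl⟩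
  rw [hr, hr']
  have hra : r * a = m := by rw [← hr]; exact Nat.div_mul_cancel ham
  have hrb : r' * b = n - m := by rw [← hr']; exact Nat.div_mul_cancel hbm
  have hrm : r ≤ m := le_trans (Nat.le_mul_of_pos_right _ ha) (le_of_eq hra)
  have hr'm : r' ≤ n - m := le_trans (Nat.le_mul_of_pos_right _ hb) (le_of_eq hrb)
  have hrN : r + r' ≤ N := by omega
  have hs1 : ∀ k, 1 ≤ (S k).card := fun k => Finset.card_pos.mpr (hSne k)
  have htN : t ≤ N := by
    have := Fintype.card_le_of_injective j hj
    simpa using this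
  -- the two target blocks
  set Af : Finset (Fin N) := univ.filter (fun y : Fin N => y.val < r) with hAf
  set Bf : Finset (Fin N) := univ.filter (fun y : Fin N => N - r' ≤ y.val) with hBf
  have hABmem : ∀ y : Fin N, (y ∈ Af ↔ y.val < r) ∧ (y ∈ Bf ↔ N - r' ≤ y.val) := by
    intro y
    constructor <;> simp [hAf, hBf]
  have hAB : Disjoint Af Bf := by
    rw [Finset.disjoint_left]
    intro y h1 h2
    rw [(hABmem y).1] at h1
    rw [(hABmem y).2] at h2
    omega
  have hAcard : Af.card = r := by
    have e : Af = univ.filter fun y : Fin N => 0 ≤ y.val ∧ y.val < 0 + r := by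
      rw [hAf]
      apply Finset.filter_congr
      intro y _
      omega
    rw [e]
    exact cnt18 N 0 r (by omega)
  have hBcard : Bf.card = r' := by
    have e : Bf = univ.filter fun y : Fin N => (N - r') ≤ y.val ∧ y.val < (N - r') + r' := by
      rw [hBf]
      apply Finset.filter_congr
      intro y _
      have := y.2
      omega
    rw [e]
    exact cnt18 N (N - r') r' (by omega)
  have hcval : ∀ y : Fin N, (univ.filter fun x : Fin n => h x = y).card
      = if y.val < r then a else if N - r' ≤ y.val then b else 0 := by
    intro y
    have := fiber_card18 hN hmn hNn ha hb ham hbm y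
    rw [hr, hr'] at this
    exact this
  -- Step 1
  have step1 : (∑ σ : Equiv.Perm (Fin n), ∑ τ : Equiv.Perm (Fin N),
      ∏ k, ∏ i ∈ S k, (if τ (h (σ i)) = j k then (1:ℝ) else 0))
      = ∑ τ : Equiv.Perm (Fin N), ∑ σ : Equiv.Perm (Fin n),
        (if (∀ k : Fin t, ∀ i ∈ S k, τ (h (σ i)) = j k) then (1:ℝ) else 0) := by
    rw [Finset.sum_comm]
    refine Finset.sum_congr rfl fun τ _ => Finset.sum_congr rfl fun σ _ => ?_
    simp only [Finset.prod_boole]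
    by_cases hP : ∀ (k : Fin t), ∀ i ∈ S k, τ (h (σ i)) = j k
    · rw [if_pos hP]
      apply Finset.prod_eq_one
      intro k _
      rw [if_pos (hP k)]
    · rw [if_neg hP]
      push_neg at hP
      obtain ⟨k, i, hi, hne⟩ := hP
      refine Finset.prod_eq_zero (Finset.mem_univ k) ?_
      rw [if_neg]
      intro hall
      exact hne (hall i hi)
  -- Step 2
  have step2 : ∀ τ : Equiv.Perm (Fin N),
      (∑ σ : Equiv.Perm (Fin n), if (∀ k : Fin t, ∀ i ∈ S k, τ (h (σ i)) = j k)
        then (1:ℝ) else 0)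
      = ((n - s).factorial : ℝ)
        * ∏ k, ((((univ.filter fun x : Fin n => h x = τ⁻¹ (j k)).card).descFactorial
            (S k).card : ℕ) : ℝ) := by
    intro τ
    rw [Finset.sum_boole]
    have e : (univ.filter fun σ : Equiv.Perm (Fin n) =>
          ∀ k : Fin t, ∀ i ∈ S k, τ (h (σ i)) = j k)
        = univ.filter fun σ : Equiv.Perm (Fin n) =>
            ∀ k : Fin t, ∀ i ∈ S k, σ i ∈ (univ.filter fun x : Fin n => h x = τ⁻¹ (j k)) := by
      apply Finset.filter_congr
      intro σ _
      constructor
      · intro hP k i hi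
        simp only [Finset.mem_filter, Finset.mem_univ, true_and]
        rw [← hP k i hi, ← Equiv.Perm.mul_apply, inv_mul_cancel, Equiv.Perm.one_apply]
      · intro hP k i hi
        have h2 := hP k i hi
        simp only [Finset.mem_filter, Finset.mem_univ, true_and] at h2
        rw [h2, ← Equiv.Perm.mul_apply, mul_inv_cancel, Equiv.Perm.one_apply]
    have pc : (univ.filter fun σ : Equiv.Perm (Fin n) =>
          ∀ k : Fin t, ∀ i ∈ S k, σ i ∈ (univ.filter fun x : Fin n => h x = τ⁻¹ (j k))).card
        = (n - s).factorial * ∏ k, (((univ.filter fun x : Fin n =>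
            h x = τ⁻¹ (j k)).card).descFactorial (S k).card) := by
      have base := perm_count18 S (fun k => univ.filter fun x : Fin n => h x = τ⁻¹ (j k))
        (fun k l hkl => hSd hkl) (fun k l hkl => by
          rw [Finset.disjoint_left]
          intro x h1 h2
          simp only [Finset.mem_filter, Finset.mem_univ, true_and] at h1 h2
          exact hkl (hj (Equiv.injective τ⁻¹ (h1.symm.trans h2))))
      beta_reduce at base
      rw [Fintype.card_fin, ← hs] at base
      convert base using 2 <;> congr!
    rw [e, pc, Nat.cast_mul, Nat.cast_prod]
  -- Step 3
  have step3 : (∑ σ : Equiv.Perm (Fin n), ∑ τ : Equiv.Perm (Fin N),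
      ∏ k, ∏ i ∈ S k, (if τ (h (σ i)) = j k then (1:ℝ) else 0))
      = ((n - s).factorial : ℝ) * ∑ τ : Equiv.Perm (Fin N),
        ∏ k, ((((univ.filter fun x : Fin n => h x = τ (j k)).card).descFactorial
            (S k).card : ℕ) : ℝ) := by
    rw [step1, Finset.sum_congr rfl (fun τ _ => step2 τ), ← Finset.mul_sum]
    congr 1
    exact Equiv.sum_comp (Equiv.inv (Equiv.Perm (Fin N)))
      (fun ρ => ∏ k, ((((univ.filter fun x : Fin n => h x = ρ (j k)).card).descFactorial
            (S k).card : ℕ) : ℝ))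
  -- pointwise split of the fiber size
  have hpt : ∀ (τ : Equiv.Perm (Fin N)) (k : Fin t),
      ((((univ.filter fun x : Fin n => h x = τ (j k)).card).descFactorial (S k).card : ℕ) : ℝ)
      = (if (τ (j k)).val < r then ((a.descFactorial (S k).card : ℕ) : ℝ) else 0)
        + (if N - r' ≤ (τ (j k)).val then ((b.descFactorial (S k).card : ℕ) : ℝ) else 0) := by
    intro τ k
    rw [hcval (τ (j k))]
    by_cases h1 : (τ (j k)).val < r
    · rw [if_pos h1, if_pos h1, if_neg (by omega : ¬(N - r' ≤ (τ (j k)).val)), add_zero]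
    · rw [if_neg h1, if_neg h1, zero_add]
      by_cases h2 : N - r' ≤ (τ (j k)).val
      · rw [if_pos h2, if_pos h2]
      · rw [if_neg h2, if_neg h2]
        obtain ⟨c, hc2⟩ : ∃ c, (S k).card = c + 1 := ⟨(S k).card - 1, by have := hs1 k; omega⟩
        rw [hc2, Nat.zero_descFactorial_succ, Nat.cast_zero]
  -- Step 4
  have step4 : (∑ τ : Equiv.Perm (Fin N),
        ∏ k, ((((univ.filter fun x : Fin n => h x = τ (j k)).card).descFactorial
            (S k).card : ℕ) : ℝ))
      = ∑ T ∈ (univ : Finset (Fin t)).powerset, ∑ τ : Equiv.Perm (Fin N),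
          (∏ k ∈ T, (if (τ (j k)).val < r then ((a.descFactorial (S k).card : ℕ) : ℝ) else 0))
          * ∏ k ∈ univ \ T,
              (if N - r' ≤ (τ (j k)).val then ((b.descFactorial (S k).card : ℕ) : ℝ) else 0) := by
    rw [show (∑ τ : Equiv.Perm (Fin N),
        ∏ k, ((((univ.filter fun x : Fin n => h x = τ (j k)).card).descFactorial
            (S k).card : ℕ) : ℝ))
        = ∑ τ : Equiv.Perm (Fin N), ∑ T ∈ (univ : Finset (Fin t)).powerset,
          (∏ k ∈ T, (if (τ (j k)).val < r then ((a.descFactorial (S k).card : ℕ) : ℝ) else 0))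
          * ∏ k ∈ univ \ T,
              (if N - r' ≤ (τ (j k)).val then ((b.descFactorial (S k).card : ℕ) : ℝ) else 0)
      from Finset.sum_congr rfl fun τ _ => by
        rw [Finset.prod_congr rfl (fun k _ => hpt τ k), Finset.prod_add]]
    exact Finset.sum_comm
  -- Step 5
  have hIte : ∀ (P Q : Prop) [Decidable P] [Decidable Q] (u v : ℝ),
      (if P then u else 0) * (if Q then v else 0) = if P ∧ Q then u * v else 0 := by
    intros P Q _ _ u v
    by_cases hP : P <;> by_cases hQ : Q <;> simp [hP, hQ]
  have step5 : ∀ T ∈ (univ : Finset (Fin t)).powerset,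
      (∑ τ : Equiv.Perm (Fin N),
          (∏ k ∈ T, (if (τ (j k)).val < r then ((a.descFactorial (S k).card : ℕ) : ℝ) else 0))
          * ∏ k ∈ univ \ T,
              (if N - r' ≤ (τ (j k)).val then ((b.descFactorial (S k).card : ℕ) : ℝ) else 0))
      = ((N - t).factorial : ℝ) *
          (((r.descFactorial T.card : ℕ) : ℝ)
            * (((r'.descFactorial (t - T.card)) : ℕ) : ℝ)
            * ((∏ k ∈ T, ((a.descFactorial (S k).card : ℕ) : ℝ))
               * ∏ k ∈ univ \ T, ((b.descFactorial (S k).card : ℕ) : ℝ))) := by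
    intro T hT
    have hTsub : T ⊆ univ := Finset.mem_powerset.mp hT
    have hTcard : T.card ≤ t := by simpa using Finset.card_le_card hTsub
    have hstep : ∀ τ : Equiv.Perm (Fin N),
        (∏ k ∈ T, (if (τ (j k)).val < r then ((a.descFactorial (S k).card : ℕ) : ℝ) else 0))
          * ∏ k ∈ univ \ T,
              (if N - r' ≤ (τ (j k)).val then ((b.descFactorial (S k).card : ℕ) : ℝ) else 0)
        = ((∏ k ∈ T, ((a.descFactorial (S k).card : ℕ) : ℝ))
            * ∏ k ∈ univ \ T, ((b.descFactorial (S k).card : ℕ) : ℝ))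
          * (if ((∀ k ∈ T, (τ (j k)).val < r) ∧ (∀ k ∈ univ \ T, N - r' ≤ (τ (j k)).val))
              then (1:ℝ) else 0) := by
      intro τ
      rw [Finset.prod_ite_zero, Finset.prod_ite_zero, hIte]
      by_cases hP : (∀ k ∈ T, (τ (j k)).val < r) ∧ (∀ k ∈ univ \ T, N - r' ≤ (τ (j k)).val)
      · simp [hP]
      · simp [hP]
    rw [Finset.sum_congr rfl fun τ _ => hstep τ, ← Finset.mul_sum, Finset.sum_boole]
    have hDd : ∀ ⦃c c' : Bool⦄, c ≠ c' →
        Disjoint (if c then T.image j else (univ \ T).image j)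
          (if c' then T.image j else (univ \ T).image j) := by
      intro c c' hcc
      have hdis : Disjoint (T.image j) ((univ \ T).image j) :=
        (Finset.disjoint_image hj).mpr Finset.disjoint_sdiff
      cases c <;> cases c'
      · exact absurd rfl hcc
      · rw [if_neg Bool.false_ne_true, if_pos rfl]; exact hdis.symm
      · rw [if_pos rfl, if_neg Bool.false_ne_true]; exact hdis
      · exact absurd rfl hcc
    have hAd : ∀ ⦃c c' : Bool⦄, c ≠ c' →
        Disjoint (if c then Af else Bf) (if c' then Af else Bf) := by
      intro c c' hcc
      cases c <;> cases c'
      · exact absurd rfl hcc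
      · rw [if_neg Bool.false_ne_true, if_pos rfl]; exact hAB.symm
      · rw [if_pos rfl, if_neg Bool.false_ne_true]; exact hAB
      · exact absurd rfl hcc
    have pc := perm_count18 (fun c : Bool => if c then T.image j else (univ \ T).image j)
      (fun c : Bool => if c then Af else Bf) hDd hAd
    have e2 : (univ.filter fun τ : Equiv.Perm (Fin N) =>
          (∀ k ∈ T, (τ (j k)).val < r) ∧ (∀ k ∈ univ \ T, N - r' ≤ (τ (j k)).val))
        = univ.filter fun τ : Equiv.Perm (Fin N) => ∀ c : Bool,
            ∀ i ∈ (if c then T.image j else (univ \ T).image j),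
              τ i ∈ (if c then Af else Bf) := by
      apply Finset.filter_congr
      intro τ _
      constructor
      · rintro ⟨h1, h2⟩ c
        cases c
        · rw [if_neg Bool.false_ne_true, if_neg Bool.false_ne_true]
          intro i hi
          obtain ⟨k, hk, rfl⟩ := Finset.mem_image.mp hi
          rw [(hABmem _).2]
          exact h2 k hk
        · rw [if_pos rfl, if_pos rfl]
          intro i hi
          obtain ⟨k, hk, rfl⟩ := Finset.mem_image.mp hi
          rw [(hABmem _).1]
          exact h1 k hk
      · intro hc
        constructor
        · intro k hk
          have := hc true (j k) (by rw [if_pos rfl]; exact Finset.mem_image_of_mem j hk)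
          rw [if_pos rfl, (hABmem _).1] at this
          exact this
        · intro k hk
          have := hc false (j k)
            (by rw [if_neg Bool.false_ne_true]; exact Finset.mem_image_of_mem j hk)
          rw [if_neg Bool.false_ne_true, (hABmem _).2] at this
          exact this
    have hDtc : (T.image j).card = T.card := Finset.card_image_of_injective T hj
    have hDfc : ((univ \ T).image j).card = t - T.card := by
      rw [Finset.card_image_of_injective _ hj, Finset.card_sdiff_of_subset (Finset.subset_univ T),
        Finset.card_univ, Fintype.card_fin]
    have hsum : (∑ c : Bool, (if c then T.image j else (univ \ T).image j).card) = t := by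
      rw [Fintype.sum_bool, if_pos rfl, if_neg Bool.false_ne_true, hDtc, hDfc]
      omega
    have hprod : (∏ c : Bool, ((if c then Af else Bf).card).descFactorial
        ((if c then T.image j else (univ \ T).image j).card))
        = r.descFactorial T.card * r'.descFactorial (t - T.card) := by
      rw [Fintype.prod_bool, if_pos rfl, if_pos rfl, if_neg Bool.false_ne_true,
        if_neg Bool.false_ne_true, hDtc, hDfc, hAcard, hBcard]
    have pc2 : (univ.filter fun τ : Equiv.Perm (Fin N) => ∀ c : Bool,
            ∀ i ∈ (if c then T.image j else (univ \ T).image j),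
              τ i ∈ (if c then Af else Bf)).card
        = (N - t).factorial * (r.descFactorial T.card * r'.descFactorial (t - T.card)) := by
      beta_reduce at pc
      rw [Fintype.card_fin] at pc
      rw [hsum, hprod] at pc
      convert pc using 2 <;> congr!
    rw [e2, pc2]
    push_cast
    ring
  rw [step3, step4, Finset.sum_congr rfl step5, ← Finset.mul_sum, ← mul_assoc]

/-- For disjoint nonempty sets `S_1,…,S_t ⊆ [n]` with distinct targets
`j_1,…,j_t ∈ [N]`, the symmetrized acceptance value
`Q(m,a,b) = E_{σ,τ}[I_S(τ ∘ f_{m,a,b} ∘ σ)]` agrees, on all valid triples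
`(m,a,b)`, with a polynomial in `(m,a,b)` of total degree at most
`Σ_k |S_k|`.  Here `[n]` and `[N]` are modelled by `Fin n` and `Fin N`, with
`i : Fin n` representing the element `i+1` of `{1,…,n}`. -/
theorem stmt_18 (n N t : ℕ) (hn : 0 < n) (hNn : n ≤ N)
    (S : Fin t → Finset (Fin n)) (j : Fin t → Fin N)
    (hSne : ∀ k, (S k).Nonempty) (hSd : Pairwise (Function.onFun Disjoint S))
    (hj : Function.Injective j) :
    ∃ Q : MvPolynomial (Fin 3) ℝ, Q.totalDegree ≤ ∑ k, (S k).card ∧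
      ∀ m a b : ℕ, m ≤ n → 0 < a → 0 < b → a ∣ m → b ∣ (n - m) →
        MvPolynomial.eval
            (fun v : Fin 3 =>
              if v = 0 then (m : ℝ) else if v = 1 then (a : ℝ) else (b : ℝ)) Q
        = (∑ σ : Equiv.Perm (Fin n), ∑ τ : Equiv.Perm (Fin N),
            ∏ k, ∏ i ∈ S k,
              (if τ ⟨((if (σ i).val + 1 ≤ m
                        then ((σ i).val + 1 + a - 1) / a
                        else N - (n - ((σ i).val + 1)) / b) - 1) % N,
                    Nat.mod_lt _ (by omega)⟩ = j k
               then (1 : ℝ) else 0))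
          / ((Nat.factorial n : ℝ) * (Nat.factorial N : ℝ)) := by
  classical
  have hN : 0 < N := lt_of_lt_of_le hn hNn
  have hs1 : ∀ k, 1 ≤ (S k).card := fun k => Finset.card_pos.mpr (hSne k)
  refine ⟨MvPolynomial.C ((((n - ∑ k, (S k).card).factorial : ℝ) * ((N - t).factorial : ℝ))
      / ((n.factorial : ℝ) * (N.factorial : ℝ)))
    * ∑ T ∈ (univ : Finset (Fin t)).powerset,
      (∏ i ∈ Finset.range T.card,
          (MvPolynomial.X 0 - MvPolynomial.C (i:ℝ) * MvPolynomial.X 1))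
      * (∏ k ∈ T, ∏ i ∈ Finset.Ico 1 (S k).card,
          (MvPolynomial.X 1 - MvPolynomial.C (i:ℝ)))
      * (∏ i ∈ Finset.range (t - T.card),
          (MvPolynomial.C (n:ℝ) - MvPolynomial.X 0 - MvPolynomial.C (i:ℝ) * MvPolynomial.X 2))
      * (∏ k ∈ univ \ T, ∏ i ∈ Finset.Ico 1 (S k).card,
          (MvPolynomial.X 2 - MvPolynomial.C (i:ℝ))), ?_, ?_⟩
  · exact deg18 n t (fun k => (S k).card) hs1 _
  · intro m a b hmn ha hb ham hbm
    have hchain := chain18 n N t hn hNn S j hSne hSd hj m a b hmn ha hb ham hbm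
    have hstmteq : (∑ σ : Equiv.Perm (Fin n), ∑ τ : Equiv.Perm (Fin N),
            ∏ k, ∏ i ∈ S k,
              (if τ ⟨((if (σ i).val + 1 ≤ m
                        then ((σ i).val + 1 + a - 1) / a
                        else N - (n - ((σ i).val + 1)) / b) - 1) % N,
                    Nat.mod_lt _ (by omega)⟩ = j k
               then (1 : ℝ) else 0))
        = (∑ σ : Equiv.Perm (Fin n), ∑ τ : Equiv.Perm (Fin N),
            ∏ k, ∏ i ∈ S k,
              (if τ (hfun18 n N m a b (lt_of_lt_of_le hn hNn) (σ i)) = j k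
               then (1 : ℝ) else 0)) := rfl
    rw [hstmteq, hchain]
    rw [map_mul, MvPolynomial.eval_C, map_sum]
    have hevalT : ∀ T ∈ (univ : Finset (Fin t)).powerset,
        MvPolynomial.eval
            (fun v : Fin 3 =>
              if v = 0 then (m : ℝ) else if v = 1 then (a : ℝ) else (b : ℝ))
          ((∏ i ∈ Finset.range T.card,
              (MvPolynomial.X 0 - MvPolynomial.C (i:ℝ) * MvPolynomial.X 1))
          * (∏ k ∈ T, ∏ i ∈ Finset.Ico 1 (S k).card,
              (MvPolynomial.X 1 - MvPolynomial.C (i:ℝ)))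
          * (∏ i ∈ Finset.range (t - T.card),
              (MvPolynomial.C (n:ℝ) - MvPolynomial.X 0 - MvPolynomial.C (i:ℝ) * MvPolynomial.X 2))
          * (∏ k ∈ univ \ T, ∏ i ∈ Finset.Ico 1 (S k).card,
              (MvPolynomial.X 2 - MvPolynomial.C (i:ℝ))))
        = (((m/a).descFactorial T.card : ℕ) : ℝ)
            * ((((n-m)/b).descFactorial (t - T.card) : ℕ) : ℝ)
            * ((∏ k ∈ T, ((a.descFactorial (S k).card : ℕ) : ℝ))
               * ∏ k ∈ univ \ T, ((b.descFactorial (S k).card : ℕ) : ℝ)) := by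
      intro T hT
      have hcompl : (univ \ T).card = t - T.card := by
        rw [Finset.card_sdiff_of_subset (Finset.subset_univ T), Finset.card_univ, Fintype.card_fin]
      simp only [map_mul, map_prod, map_sub, MvPolynomial.eval_C, MvPolynomial.eval_X]
      norm_num
      have e20 : ((2:Fin 3) = 0) = False := eq_false (by decide)
      have e21 : ((2:Fin 3) = 1) = False := eq_false (by decide)
      simp only [e20, e21, if_false]
      have h1 : ∏ i ∈ Finset.range T.card, ((m:ℝ) - (i:ℝ) * (a:ℝ))
          = (((m/a).descFactorial T.card : ℕ) : ℝ) * (a:ℝ)^T.card :=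
        descmul18 T.card (Nat.div_mul_cancel ham)
      have h3 : ∏ i ∈ Finset.range (t - T.card), ((n:ℝ) - (m:ℝ) - (i:ℝ) * (b:ℝ))
          = ((((n-m)/b).descFactorial (t - T.card) : ℕ) : ℝ) * (b:ℝ)^(t - T.card) := by
        rw [← descmul18 (t - T.card) (Nat.div_mul_cancel hbm)]
        apply Finset.prod_congr rfl
        intro i _
        rw [Nat.cast_sub hmn]
      have h2 : ∏ k ∈ T, ((a.descFactorial (S k).card : ℕ) : ℝ)
          = (a:ℝ)^T.card * ∏ k ∈ T, ∏ i ∈ Finset.Ico 1 (S k).card, ((a:ℝ) - (i:ℝ)) := by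
        rw [Finset.prod_congr rfl (fun k _ => desc_split18 a (hs1 k)),
          Finset.prod_mul_distrib, Finset.prod_const]
      have h4 : ∏ k ∈ univ \ T, ((b.descFactorial (S k).card : ℕ) : ℝ)
          = (b:ℝ)^(t - T.card)
            * ∏ k ∈ univ \ T, ∏ i ∈ Finset.Ico 1 (S k).card, ((b:ℝ) - (i:ℝ)) := by
        rw [Finset.prod_congr rfl (fun k _ => desc_split18 b (hs1 k)),
          Finset.prod_mul_distrib, Finset.prod_const, hcompl]
      rw [h1, h3, h2, h4]
      ring
    rw [Finset.sum_congr rfl hevalT]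
    ring
end
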